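/- Let {Z_x : x ∈ A} be a centered Gaussian vector indexed by finite A with positive-definite covariance Γ = (I−Q)^{-1} where Q is a symmetric integrable real weight with associated edge weights θ_e (θ_{xy} = 2q(x,y) for x≠y, θ_{xx} = q(x,x)). Set T_x = Z_x^2/2. Then the density of (T_x)_{x∈A} at (t_x) equals [Π_x (π t_x)^{-1/2}] exp(−Σ_x t_x) · √(det(I−Q)) · E[ exp( Σ_{e∈E} θ_e J_e √(t_e) ) ], where {J_x} are independent symmetric ±1 signs, J_e = J_x J_y, and √(t_e) = √(t_x)√(t_y) for e with endpoints x,y (so √(t_e) = t_x for a self-edge at x). -/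

import Mathlib

open scoped BigOperators
open MeasureTheory

/-- All eigenvalues of `M` have modulus strictly less than one. -/
def SpecLtOne {A : Type*} [Fintype A] [DecidableEq A] (M : Matrix A A ℂ) : Prop :=
  ∀ z ∈ spectrum ℂ M, ‖z‖ < 1

/-- Integrability: spectral radius of entrywise `|Q|` is `< 1`. -/
def IntegrableWeight {A : Type*} [Fintype A] [DecidableEq A] (Q : Matrix A A ℂ) : Prop :=
  SpecLtOne (Matrix.of fun x y => (‖Q x y‖ : ℂ))

/-- The density of the Gaussian field generated by the weight `Q` (with edge weights `θ`):
`φ(z)·√(det(I−Q))·exp(½ Σ_e θ_e z_e)`. -/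
noncomputable def gaussDensity {A : Type*} [Fintype A] [DecidableEq A] (Q : Matrix A A ℝ)
    (θ : Sym2 A → ℝ) (z : A → ℝ) : ℝ :=
  (∏ x : A, Real.exp (-(z x) ^ 2 / 2) / Real.sqrt (2 * Real.pi)) *
    Real.sqrt ((1 - Q).det) *
    Real.exp ((1 / 2) * ∑ e : Sym2 A,
      θ e * Sym2.lift ⟨fun x y => z x * z y, fun x y => mul_comm _ _⟩ e)

/-- The claimed density of `(T_x) = (Z_x²/2)`:
`[Π_x (π t_x)^{-1/2}] exp(−Σ t_x) √(det(I−Q)) · E[exp(Σ_e θ_e J_e √(t_e))]`. -/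
noncomputable def sqDensity {A : Type*} [Fintype A] [DecidableEq A] (Q : Matrix A A ℝ)
    (θ : Sym2 A → ℝ) (t : A → ℝ) : ℝ :=
  (∏ x : A, (Real.sqrt (Real.pi * t x))⁻¹) * Real.exp (-∑ x : A, t x) *
    Real.sqrt ((1 - Q).det) *
    ((∑ J : A → Bool, Real.exp (∑ e : Sym2 A,
        θ e *
          Sym2.lift ⟨fun x y => (if J x then (1 : ℝ) else -1) * (if J y then 1 else -1),
            fun x y => mul_comm _ _⟩ e *
          Sym2.lift ⟨fun x y => Real.sqrt (t x) * Real.sqrt (t y),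
            fun x y => mul_comm _ _⟩ e)) /
      (2 : ℝ) ^ Fintype.card A)

section Aux

set_option linter.unusedSectionVars false
set_option linter.unusedVariables false

variable {A : Type*} [Fintype A] [DecidableEq A]

/-- The derivative of `z ↦ (z x ^ 2 / 2)_x`: the diagonal map `v ↦ (z x * v x)_x`. -/
noncomputable def sqMapDeriv (z : A → ℝ) : (A → ℝ) →L[ℝ] (A → ℝ) :=
  ContinuousLinearMap.pi fun x => z x • ContinuousLinearMap.proj x

lemma hasFDerivAt_sqMap (z : A → ℝ) :
    HasFDerivAt (fun z : A → ℝ => fun x => z x ^ 2 / 2) (sqMapDeriv z) z := by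
  apply hasFDerivAt_pi.2
  intro i
  have h1 : HasDerivAt (fun u : ℝ => u ^ 2 / 2) (z i) (z i) := by
    have := (hasDerivAt_pow 2 (z i)).div_const 2
    simpa using this
  have h2 : HasFDerivAt (fun w : A → ℝ => w i)
      (ContinuousLinearMap.proj (R := ℝ) (φ := fun _ : A => ℝ) i) z :=
    hasFDerivAt_apply (𝕜 := ℝ) (F' := fun _ : A => ℝ) i z
  simpa [Function.comp_def] using h1.comp_hasFDerivAt z h2

lemma det_sqMapDeriv (z : A → ℝ) : (sqMapDeriv z).det = ∏ x, z x := by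
  have : (sqMapDeriv z : (A → ℝ) →ₗ[ℝ] (A → ℝ)) =
      Matrix.toLin (Pi.basisFun ℝ A) (Pi.basisFun ℝ A) (Matrix.diagonal z) := by
    apply LinearMap.ext; intro v
    ext i
    simp [sqMapDeriv, Matrix.toLin_apply, Matrix.mulVec, dotProduct,
      Matrix.diagonal, Pi.single_apply, mul_ite, ite_mul, Finset.sum_ite_eq']
  rw [ContinuousLinearMap.det, this, LinearMap.det_toLin, Matrix.det_diagonal]

lemma null_hyper (x0 : A) : volume {z : A → ℝ | z x0 = 0} = 0 := by
  have h : {z : A → ℝ | z x0 = 0} =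
      Set.pi Set.univ (fun y => if y = x0 then ({0} : Set ℝ) else Set.univ) := by
    ext z
    simp only [Set.mem_setOf_eq, Set.mem_pi, Set.mem_univ, forall_true_left]
    constructor
    · intro hz y; by_cases hy : y = x0 <;> simp [hy, hz]
    · intro hz; have := hz x0; simpa using this
  rw [h, volume_pi_pi]
  apply Finset.prod_eq_zero (Finset.mem_univ x0)
  simp

lemma null_Z : volume {z : A → ℝ | ∃ x, z x = 0} = 0 := by
  have h : {z : A → ℝ | ∃ x, z x = 0} = ⋃ x : A, {z : A → ℝ | z x = 0} := by
    ext z; simp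
  rw [h]
  exact measure_iUnion_null fun x => null_hyper x

/-- The open orthant with sign pattern `J`. -/
def orthant (J : A → Bool) : Set (A → ℝ) :=
  {z : A → ℝ | ∀ x, 0 < (if J x then (1 : ℝ) else -1) * z x}

lemma measurableSet_orthant (J : A → Bool) : MeasurableSet (orthant J) := by
  have h : orthant J = ⋂ x : A, {z : A → ℝ | 0 < (if J x then (1 : ℝ) else -1) * z x} := by
    ext z; simp [orthant]
  rw [h]
  refine MeasurableSet.iInter fun x => ?_
  exact measurableSet_lt measurable_const ((measurable_pi_apply x).const_mul _)

lemma orthant_ne_zero (J : A → Bool) {z : A → ℝ} (hz : z ∈ orthant J) (x : A) : z x ≠ 0 := by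
  have := hz x
  intro h0
  rw [h0, mul_zero] at this
  exact lt_irrefl 0 this

lemma injOn_orthant (J : A → Bool) :
    Set.InjOn (fun z : A → ℝ => fun x => (z x) ^ 2 / 2) (orthant J) := by
  intro z hz w hw h
  funext x
  have h1 : z x ^ 2 / 2 = w x ^ 2 / 2 := congrFun h x
  have h2 : z x ^ 2 = w x ^ 2 := by linarith
  have h3 : (z x - w x) * (z x + w x) = 0 := by linear_combination h2
  have hz' := hz x
  have hw' := hw x
  rcases mul_eq_zero.1 h3 with h4 | h4
  · linarith
  · exfalso
    by_cases hJ : J x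
    · simp only [hJ, if_true, one_mul] at hz' hw'; linarith
    · simp only [hJ, if_false, neg_mul, one_mul, neg_pos] at hz' hw'
      simp at hz' hw'
      linarith

lemma image_orthant (J : A → Bool) :
    (fun z : A → ℝ => fun x => (z x) ^ 2 / 2) '' (orthant J) = {t : A → ℝ | ∀ x, 0 < t x} := by
  ext u
  constructor
  · rintro ⟨z, hz, rfl⟩ x
    have hne := orthant_ne_zero J hz x
    positivity
  · intro hu
    refine ⟨fun x => (if J x then (1 : ℝ) else -1) * Real.sqrt (2 * u x), fun x => ?_, ?_⟩
    · have hpos : 0 < Real.sqrt (2 * u x) := Real.sqrt_pos.2 (by linarith [hu x])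
      by_cases hJ : J x <;> simp [hJ, hpos] <;> exact hu x
    · funext x
      show ((if J x then (1:ℝ) else -1) * Real.sqrt (2 * u x)) ^ 2 / 2 = u x
      have h1 : ((if J x then (1 : ℝ) else -1)) ^ 2 = 1 := by by_cases hJ : J x <;> simp [hJ]
      rw [mul_pow, h1, one_mul, Real.sq_sqrt (by linarith [hu x] : (0:ℝ) ≤ 2 * u x)]
      ring

lemma orthant_disjoint :
    Pairwise (Function.onFun Disjoint (fun J : A → Bool => orthant J)) := by
  intro J J' hne
  rw [Function.onFun, Set.disjoint_left]
  intro z hz hz'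
  apply hne
  funext x
  have h1 := hz x
  have h2 := hz' x
  by_cases hJ : J x <;> by_cases hJ' : J' x <;> simp [hJ, hJ'] at h1 h2 ⊢ <;> linarith

lemma mem_union_orthant {z : A → ℝ} (hz : ∀ x, z x ≠ 0) :
    ∃ J : A → Bool, z ∈ orthant J := by
  refine ⟨fun x => decide (0 < z x), fun x => ?_⟩
  by_cases hp : 0 < z x
  · simp [hp]
  · have : z x < 0 := lt_of_le_of_ne (not_lt.1 hp) (hz x)
    simp [hp, this]

lemma measurable_lift_term (e : Sym2 A) :
    Measurable (fun z : A → ℝ =>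
      Sym2.lift ⟨fun x y => z x * z y, fun x y => mul_comm _ _⟩ e) := by
  induction e using Sym2.ind with
  | _ x y =>
    simp only [Sym2.lift_mk]
    exact (measurable_pi_apply x).mul (measurable_pi_apply y)

lemma measurable_gaussDensity (Q : Matrix A A ℝ) (θ : Sym2 A → ℝ) :
    Measurable (gaussDensity Q θ) := by
  unfold gaussDensity
  refine Measurable.mul (Measurable.mul ?_ measurable_const) ?_
  · refine Finset.measurable_prod _ fun x _ => ?_
    exact (Real.measurable_exp.comp
      (((measurable_pi_apply x).pow_const 2).neg.div_const 2)).div_const _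
  · refine Real.measurable_exp.comp (Measurable.const_mul ?_ _)
    exact Finset.measurable_sum _ fun e _ => (measurable_lift_term e).const_mul _

lemma gaussDensity_nonneg (Q : Matrix A A ℝ) (θ : Sym2 A → ℝ) (z : A → ℝ) :
    0 ≤ gaussDensity Q θ z := by
  unfold gaussDensity
  have h1 : (0:ℝ) ≤ ∏ x : A, Real.exp (-(z x) ^ 2 / 2) / Real.sqrt (2 * Real.pi) :=
    Finset.prod_nonneg fun x _ => div_nonneg (Real.exp_nonneg _) (Real.sqrt_nonneg _)
  positivity

lemma gauss_at_sign (Q : Matrix A A ℝ) (θ : Sym2 A → ℝ) (t : A → ℝ) (ht : ∀ x, 0 ≤ t x)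
    (J : A → Bool) :
    gaussDensity Q θ (fun x => (if J x then (1 : ℝ) else -1) * Real.sqrt (2 * t x)) =
      (∏ x : A, Real.exp (-(t x)) / Real.sqrt (2 * Real.pi)) * Real.sqrt ((1 - Q).det) *
      Real.exp (∑ e : Sym2 A,
        θ e *
          Sym2.lift ⟨fun x y => (if J x then (1 : ℝ) else -1) * (if J y then 1 else -1),
            fun x y => mul_comm _ _⟩ e *
          Sym2.lift ⟨fun x y => Real.sqrt (t x) * Real.sqrt (t y),
            fun x y => mul_comm _ _⟩ e) := by
  have hsq : ∀ x, ((if J x then (1 : ℝ) else -1) * Real.sqrt (2 * t x)) ^ 2 = 2 * t x := by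
    intro x
    have h1 : ((if J x then (1 : ℝ) else -1)) ^ 2 = 1 := by
      by_cases h : J x <;> simp [h]
    rw [mul_pow, h1, one_mul, Real.sq_sqrt (by linarith [ht x])]
  unfold gaussDensity
  congr 1
  · congr 1
    apply Finset.prod_congr rfl
    intro x _
    rw [hsq x]
    ring_nf
  · congr 1
    rw [Finset.mul_sum]
    apply Finset.sum_congr rfl
    intro e _
    induction e using Sym2.ind with
    | _ x y =>
      simp only [Sym2.lift_mk]
      have h2 : Real.sqrt (2 * t x) * Real.sqrt (2 * t y)
          = 2 * (Real.sqrt (t x) * Real.sqrt (t y)) := by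
        rw [Real.sqrt_mul (by norm_num : (0:ℝ) ≤ 2), Real.sqrt_mul (by norm_num : (0:ℝ) ≤ 2)]
        have : Real.sqrt 2 * Real.sqrt 2 = 2 := Real.mul_self_sqrt (by norm_num)
        ring_nf
        rw [Real.sq_sqrt (by norm_num : (0:ℝ) ≤ 2)]
        ring
      calc (1:ℝ)/2 * (θ (Sym2.mk x y) *
            ((if J x then (1 : ℝ) else -1) * Real.sqrt (2 * t x) *
              ((if J y then (1 : ℝ) else -1) * Real.sqrt (2 * t y))))
          = 1/2 * (θ (Sym2.mk x y) *
            ((if J x then (1 : ℝ) else -1) * (if J y then (1 : ℝ) else -1) *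
              (Real.sqrt (2 * t x) * Real.sqrt (2 * t y)))) := by ring
        _ = _ := by rw [h2]; ring

lemma sum_gauss (Q : Matrix A A ℝ) (θ : Sym2 A → ℝ) (t : A → ℝ) (ht : ∀ x, 0 < t x) :
    (∑ J : A → Bool, gaussDensity Q θ
        (fun x => (if J x then (1 : ℝ) else -1) * Real.sqrt (2 * t x))) /
      (∏ x : A, Real.sqrt (2 * t x)) = sqDensity Q θ t := by
  have key : ∀ x : A, Real.exp (-(t x)) / Real.sqrt (2 * Real.pi) / Real.sqrt (2 * t x)
      = Real.exp (-(t x)) * (Real.sqrt (Real.pi * t x))⁻¹ / 2 := by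
    intro x
    have h1 : Real.sqrt (2 * Real.pi) * Real.sqrt (2 * t x)
        = 2 * Real.sqrt (Real.pi * t x) := by
      rw [← Real.sqrt_mul (by positivity)]
      have : 2 * Real.pi * (2 * t x) = 2 ^ 2 * (Real.pi * t x) := by ring
      rw [this, Real.sqrt_mul (by positivity), Real.sqrt_sq (by norm_num)]
    rw [div_div, h1]
    field_simp
  have hD : (∏ x : A, Real.sqrt (2 * t x)) ≠ 0 := by
    apply Finset.prod_ne_zero_iff.2
    intro x _
    exact (Real.sqrt_pos.2 (by linarith [ht x])).ne'
  rw [Finset.sum_congr rfl (fun J _ => gauss_at_sign Q θ t (fun x => (ht x).le) J)]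
  rw [← Finset.mul_sum]
  have h2 : (∏ x : A, Real.exp (-(t x)) / Real.sqrt (2 * Real.pi)) /
      (∏ x : A, Real.sqrt (2 * t x)) =
      (∏ x : A, (Real.sqrt (Real.pi * t x))⁻¹) * Real.exp (-∑ x : A, t x) /
        2 ^ Fintype.card A := by
    rw [← Finset.prod_div_distrib]
    rw [Finset.prod_congr rfl (fun x _ => key x)]
    rw [Finset.prod_div_distrib, Finset.prod_mul_distrib, Finset.prod_const,
      Finset.card_univ, ← Real.exp_sum]
    have hneg : (∑ x : A, -t x) = -∑ x : A, t x := by simp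
    rw [hneg, mul_comm]
  unfold sqDensity
  have expand : ((∏ x : A, Real.exp (-(t x)) / Real.sqrt (2 * Real.pi)) * Real.sqrt ((1-Q).det) *
      (∑ J : A → Bool, Real.exp (∑ e : Sym2 A,
        θ e *
          Sym2.lift ⟨fun x y => (if J x then (1 : ℝ) else -1) * (if J y then 1 else -1),
            fun x y => mul_comm _ _⟩ e *
          Sym2.lift ⟨fun x y => Real.sqrt (t x) * Real.sqrt (t y),
            fun x y => mul_comm _ _⟩ e))) / (∏ x : A, Real.sqrt (2 * t x))
      = ((∏ x : A, Real.exp (-(t x)) / Real.sqrt (2 * Real.pi)) /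
          (∏ x : A, Real.sqrt (2 * t x))) * (Real.sqrt ((1-Q).det) *
      (∑ J : A → Bool, Real.exp (∑ e : Sym2 A,
        θ e *
          Sym2.lift ⟨fun x y => (if J x then (1 : ℝ) else -1) * (if J y then 1 else -1),
            fun x y => mul_comm _ _⟩ e *
          Sym2.lift ⟨fun x y => Real.sqrt (t x) * Real.sqrt (t y),
            fun x y => mul_comm _ _⟩ e))) := by ring
  rw [expand, h2]
  ring

lemma sqDensity_eq_zero (Q : Matrix A A ℝ) (θ : Sym2 A → ℝ) {t : A → ℝ}
    (ht : ¬ ∀ x, 0 < t x) : sqDensity Q θ t = 0 := by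
  push_neg at ht
  obtain ⟨x, hx⟩ := ht
  unfold sqDensity
  have h0 : (∏ y : A, (Real.sqrt (Real.pi * t y))⁻¹) = 0 := by
    apply Finset.prod_eq_zero (Finset.mem_univ x)
    have h : Real.sqrt (Real.pi * t x) = 0 := by
      rw [Real.sqrt_eq_zero']
      nlinarith [Real.pi_pos]
    rw [h, inv_zero]
  rw [h0, zero_mul, zero_mul, zero_mul]

end Aux

/-- The law of `(Z_x²/2)` for the Gaussian field `Z` with covariance `(I−Q)⁻¹`
has the stated density. -/
theorem stmt15 {A : Type*} [Fintype A] [DecidableEq A] (Q : Matrix A A ℝ)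
    (hsym : Q.IsSymm) (hpd : (1 - Q).PosDef)
    (hint : IntegrableWeight (Q.map (fun a => (a : ℂ))))
    (θ : Sym2 A → ℝ)
    (hθ : ∀ x y : A, x ≠ y → θ (Sym2.mk x y) = 2 * Q x y)
    (hθd : ∀ x : A, θ (Sym2.mk x x) = Q x x) :
    Measure.map (fun z : A → ℝ => fun x => (z x) ^ 2 / 2)
        (MeasureTheory.volume.withDensity
          (fun z : A → ℝ => ENNReal.ofReal (gaussDensity Q θ z)))
      = MeasureTheory.volume.withDensity
          (fun t : A → ℝ => ENNReal.ofReal (sqDensity Q θ t)) := by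
  classical
  set f : (A → ℝ) → (A → ℝ) := fun z => fun x => (z x) ^ 2 / 2 with hf_def
  have hf_meas : Measurable f := by
    apply measurable_pi_lambda
    intro x
    exact ((measurable_pi_apply x).pow_const 2).div_const 2
  set G : (A → ℝ) → ENNReal := fun z => ENNReal.ofReal (gaussDensity Q θ z) with hG_def
  set P : Set (A → ℝ) := {t | ∀ x, 0 < t x} with hP_def
  have hPm : MeasurableSet P := by
    have h : P = ⋂ x : A, {t : A → ℝ | 0 < t x} := by ext t; simp [hP_def]
    rw [h]
    exact MeasurableSet.iInter fun x =>
      measurableSet_lt measurable_const (measurable_pi_apply x)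
  set gJ : (A → Bool) → (A → ℝ) → ENNReal := fun J u => ENNReal.ofReal
    (gaussDensity Q θ (fun x => (if J x then (1:ℝ) else -1) * Real.sqrt (2 * u x)) /
      ∏ x : A, Real.sqrt (2 * u x)) with hgJ_def
  have hgJm : ∀ J, Measurable (gJ J) := by
    intro J
    apply ENNReal.measurable_ofReal.comp
    apply Measurable.div
    · apply (measurable_gaussDensity Q θ).comp
      apply measurable_pi_lambda
      intro x
      exact (Real.continuous_sqrt.measurable.comp
        ((measurable_pi_apply x).const_mul 2)).const_mul _
    · exact Finset.measurable_prod _ fun x _ =>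
        Real.continuous_sqrt.measurable.comp ((measurable_pi_apply x).const_mul 2)
  ext s hs
  rw [Measure.map_apply hf_meas hs, withDensity_apply _ (hf_meas hs), withDensity_apply _ hs]
  have step1 : ∀ J : A → Bool,
      ∫⁻ z in orthant J ∩ f ⁻¹' s, G z = ∫⁻ u in P ∩ s, gJ J u := by
    intro J
    have hms : MeasurableSet (orthant J ∩ f ⁻¹' s) :=
      (measurableSet_orthant J).inter (hf_meas hs)
    have hderiv : ∀ z ∈ orthant J ∩ f ⁻¹' s,
        HasFDerivWithinAt f (sqMapDeriv z) (orthant J ∩ f ⁻¹' s) z :=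
      fun z _ => (hasFDerivAt_sqMap z).hasFDerivWithinAt
    have hinj : Set.InjOn f (orthant J ∩ f ⁻¹' s) :=
      (injOn_orthant J).mono Set.inter_subset_left
    have him : f '' (orthant J ∩ f ⁻¹' s) = P ∩ s := by
      rw [Set.image_inter_preimage]
      rw [hf_def, image_orthant J, hP_def]
    have hcov := lintegral_image_eq_lintegral_abs_det_fderiv_mul volume hms hderiv hinj (gJ J)
    rw [him] at hcov
    rw [hcov]
    apply setLIntegral_congr_fun hms
    intro z hz
    obtain ⟨hzJ, _⟩ := hz
    have habs : ∀ x, Real.sqrt (2 * (f z x)) = |z x| := by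
      intro x
      show Real.sqrt (2 * (z x ^ 2 / 2)) = |z x|
      rw [show 2 * (z x ^ 2 / 2) = z x ^ 2 by ring, Real.sqrt_sq_eq_abs]
    have hsgn : ∀ x, (if J x then (1:ℝ) else -1) * |z x| = z x := by
      intro x
      have h1 := hzJ x
      by_cases hJ : J x
      · rw [if_pos hJ, one_mul] at h1 ⊢
        exact abs_of_pos h1
      · rw [if_neg hJ] at h1 ⊢
        have hneg : z x < 0 := by nlinarith
        rw [abs_of_neg hneg]; ring
    have hdet : |(sqMapDeriv z).det| = ∏ x : A, |z x| := by
      rw [det_sqMapDeriv, Finset.abs_prod]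
    have hprodpos : (0:ℝ) < ∏ x : A, |z x| :=
      Finset.prod_pos fun x _ => abs_pos.2 (orthant_ne_zero J hzJ x)
    have harg : (fun x => (if J x then (1:ℝ) else -1) * Real.sqrt (2 * f z x)) = z := by
      funext x; rw [habs x, hsgn x]
    have hprodeq : (∏ x : A, Real.sqrt (2 * f z x)) = ∏ x : A, |z x| :=
      Finset.prod_congr rfl fun x _ => habs x
    symm
    show ENNReal.ofReal |(sqMapDeriv z).det| * gJ J (f z) = G z
    rw [hgJ_def]
    simp only []
    rw [harg, hprodeq, hdet]
    rw [← ENNReal.ofReal_mul (Finset.prod_nonneg fun x _ => abs_nonneg _)]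
    rw [hG_def]
    congr 1
    rw [mul_comm, div_mul_cancel₀ _ hprodpos.ne']
  have hdisj : Pairwise (Function.onFun Disjoint
      (fun J : A → Bool => orthant J ∩ f ⁻¹' s)) := by
    intro J J' hne
    exact ((orthant_disjoint hne).mono Set.inter_subset_left Set.inter_subset_left)
  have cover : ∫⁻ z in f ⁻¹' s, G z
      = ∑ J : A → Bool, ∫⁻ z in orthant J ∩ f ⁻¹' s, G z := by
    have hae : f ⁻¹' s =ᵐ[volume] ⋃ J : A → Bool, orthant J ∩ f ⁻¹' s := by
      rw [MeasureTheory.ae_eq_set]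
      constructor
      · apply measure_mono_null _ null_Z
        intro z hz
        obtain ⟨hzs, hznot⟩ := hz
        by_contra hcon
        simp only [Set.mem_setOf_eq, not_exists] at hcon
        obtain ⟨J, hJ⟩ := mem_union_orthant hcon
        exact hznot (Set.mem_iUnion.2 ⟨J, hJ, hzs⟩)
      · have hsub : (⋃ J : A → Bool, orthant J ∩ f ⁻¹' s) \ f ⁻¹' s = ∅ := by
          apply Set.diff_eq_empty.2
          intro z hz
          obtain ⟨J, _, hz2⟩ := Set.mem_iUnion.1 hz
          exact hz2
        rw [hsub]; exact measure_empty
    rw [setLIntegral_congr hae,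
      lintegral_iUnion (fun J => (measurableSet_orthant J).inter (hf_meas hs)) hdisj G,
      tsum_fintype]
  have sum_eq : ∑ J : A → Bool, ∫⁻ u in P ∩ s, gJ J u
      = ∫⁻ u in P ∩ s, ∑ J : A → Bool, gJ J u :=
    (lintegral_finset_sum _ (fun J _ => hgJm J)).symm
  have final : ∫⁻ u in P ∩ s, (∑ J : A → Bool, gJ J u)
      = ∫⁻ u in P ∩ s, ENNReal.ofReal (sqDensity Q θ u) := by
    apply setLIntegral_congr_fun (hPm.inter hs)
    intro u hu
    obtain ⟨huP, _⟩ := hu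
    rw [hgJ_def]
    simp only []
    rw [← ENNReal.ofReal_sum_of_nonneg (fun J _ => div_nonneg (gaussDensity_nonneg _ _ _)
      (Finset.prod_nonneg fun x _ => Real.sqrt_nonneg _))]
    congr 1
    rw [← Finset.sum_div]
    exact sum_gauss Q θ u huP
  have rhs_split : ∫⁻ u in s, ENNReal.ofReal (sqDensity Q θ u)
      = ∫⁻ u in P ∩ s, ENNReal.ofReal (sqDensity Q θ u) := by
    have hzero : ∫⁻ u in s \ P, ENNReal.ofReal (sqDensity Q θ u) = 0 := by
      have h : ∀ u ∈ s \ P, ENNReal.ofReal (sqDensity Q θ u) = (0 : ENNReal) := by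
        intro u hu
        rw [sqDensity_eq_zero Q θ (fun hc => hu.2 hc), ENNReal.ofReal_zero]
      rw [setLIntegral_congr_fun (hs.diff hPm) h, lintegral_zero]
    rw [← lintegral_inter_add_diff (fun u => ENNReal.ofReal (sqDensity Q θ u)) s hPm,
      hzero, add_zero, Set.inter_comm]
  rw [cover, Finset.sum_congr rfl (fun J _ => step1 J), sum_eq, final, rhs_split]
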